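/- Fix integers d1, d2 ≥ 1 with d1 ≥ 2 or d2 ≥ 2, and q ∈ (0,1]. Then there exists N ∈ ℕ such that for every n ≥ N the function f_n(p) = (φ_n(p))^{1/n} − 1/(d1·d2) is continuous and strictly increasing on [0,1] with f_n(0) < 0 < f_n(1), hence has a unique root p̃_n ∈ (0,1); moreover the sequence (p̃_n)_{n≥N} converges to the unique root p̃ ∈ (0,1) of f. -/

import Mathlib

/-- κ = (d1+1)(d2+1). -/
noncomputable def frogKappa (d1 d2 : ℕ) : ℝ := ((d1 : ℝ) + 1) * ((d2 : ℝ) + 1)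

/-- The discriminant Δ(p) = κ² − 2κ(d1+d2)p² + (d2−d1)²p⁴. -/
noncomputable def frogDelta (d1 d2 : ℕ) (p : ℝ) : ℝ :=
  (frogKappa d1 d2) ^ 2 - 2 * (frogKappa d1 d2) * ((d1 : ℝ) + (d2 : ℝ)) * p ^ 2
    + ((d2 : ℝ) - (d1 : ℝ)) ^ 2 * p ^ 4

/-- α(p) = (κ + p²(d2−d1) − √Δ(p)) / (2 d2 (d1+1) p) for p ≠ 0, and α(0) = 0. -/
noncomputable def frogAlpha (d1 d2 : ℕ) (p : ℝ) : ℝ :=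
  if p = 0 then 0 else
    (frogKappa d1 d2 + p ^ 2 * ((d2 : ℝ) - (d1 : ℝ)) - Real.sqrt (frogDelta d1 d2 p)) /
      (2 * (d2 : ℝ) * ((d1 : ℝ) + 1) * p)

/-- β(p) = (κ + p²(d1−d2) − √Δ(p)) / (2 d1 (d2+1) p) for p ≠ 0, and β(0) = 0. -/
noncomputable def frogBeta (d1 d2 : ℕ) (p : ℝ) : ℝ :=
  if p = 0 then 0 else
    (frogKappa d1 d2 + p ^ 2 * ((d1 : ℝ) - (d2 : ℝ)) - Real.sqrt (frogDelta d1 d2 p)) /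
      (2 * (d1 : ℝ) * ((d2 : ℝ) + 1) * p)

/-- φₙ(p) = q·[α(p)β(p)(1+q(1−β(p)))]ⁿ·[1+q(1−α(p))]^{n−1}. -/
noncomputable def frogPhi (d1 d2 : ℕ) (q : ℝ) (n : ℕ) (p : ℝ) : ℝ :=
  q * (frogAlpha d1 d2 p * frogBeta d1 d2 p * (1 + q * (1 - frogBeta d1 d2 p))) ^ n *
    (1 + q * (1 - frogAlpha d1 d2 p)) ^ (n - 1)

/-- f(p) = α(p)β(p)(1+q(1−α(p)))(1+q(1−β(p))) − 1/(d1 d2). -/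
noncomputable def frogF (d1 d2 : ℕ) (q : ℝ) (p : ℝ) : ℝ :=
  frogAlpha d1 d2 p * frogBeta d1 d2 p * (1 + q * (1 - frogAlpha d1 d2 p)) *
    (1 + q * (1 - frogBeta d1 d2 p)) - 1 / ((d1 : ℝ) * (d2 : ℝ))

/-- fₙ(p) = (φₙ(p))^{1/n} − 1/(d1 d2). -/
noncomputable def frogFn (d1 d2 : ℕ) (q : ℝ) (n : ℕ) (p : ℝ) : ℝ :=
  (frogPhi d1 d2 q n p) ^ ((1 : ℝ) / (n : ℝ)) - 1 / ((d1 : ℝ) * (d2 : ℝ))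

/-!
Put w(p) = κ/p + (d2 − d1)p. Then Δ(p) = p²(w(p)² − 4κd2), and rationalising the numerator gives
α(p) = 2(d2+1)/(w(p) + √(w(p)² − 4κd2)) for p > 0. As w decreases on (0,1], α increases strictly
from α(0) = 0 to α(1) = (d2+1)/(d2(d1+1)) ≤ 1; β is α with d1, d2 swapped, and α(1)β(1) = 1/(d1d2).
With u(y) = y(1 + q(1 − y)), increasing on [0,1] since q ≤ 1, the function
G = f + 1/(d1d2) = u(α)u(β) therefore increases strictly from 0 to a value above 1/(d1d2)
(strictly, because α(1), β(1) < 1 once d1d2 ≥ 2). Moreover φₙ = q·A·G^{n−1} with A = α·u(β), so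
fₙ is strictly increasing and fₙ(p) → f(p) for p ∈ (0,1]. Zeros of increasing functions converging
pointwise to a strictly increasing function converge to its zero.
-/

open Set Filter Topology

lemma sub_sqrt_div_eq_div_add_sqrt {b D A C : ℝ} (hD : 0 ≤ D) (hb : b + √D ≠ 0) (hA : A ≠ 0)
    (h : b ^ 2 - D = A * C) : (b - √D) / A = C / (b + √D) := by
  rw [div_eq_div_iff hA hb]
  linear_combination h - Real.sq_sqrt hD

lemma StrictMonoOn.mul_pow_of_nonneg {α : Type*} [Preorder α] {f g : α → ℝ} {s : Set α}
    (hf : StrictMonoOn f s) (hg : StrictMonoOn g s) (hf0 : ∀ x ∈ s, 0 ≤ f x)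
    (hg0 : ∀ x ∈ s, 0 ≤ g x) (k : ℕ) : StrictMonoOn (fun x => f x * g x ^ k) s := by
  intro x hx y hy hxy
  have hgy : 0 < g y := (hg0 x hx).trans_lt (hg hx hy hxy)
  calc f x * g x ^ k ≤ f x * g y ^ k :=
        mul_le_mul_of_nonneg_left (pow_le_pow_left₀ (hg0 x hx) (hg hx hy hxy).le k) (hf0 x hx)
    _ < f y * g y ^ k := mul_lt_mul_of_pos_right (hf hx hy hxy) (pow_pos hgy k)

lemma strictMonoOn_mul_one_add_mul_one_sub {q : ℝ} (hq : q ∈ Icc 0 1) :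
    StrictMonoOn (fun y => y * (1 + q * (1 - y))) (Icc 0 1) := by
  rintro y ⟨hy0, -⟩ z ⟨-, hz1⟩ hyz
  have hfac : 0 < 1 + q - q * (y + z) := by nlinarith [hq.1, hq.2]
  nlinarith [mul_pos (sub_pos.2 hyz) hfac]

lemma mul_one_add_mul_one_sub_nonneg {q y : ℝ} (hq : q ∈ Icc 0 1) (hy : y ∈ Icc 0 1) :
    0 ≤ y * (1 + q * (1 - y)) :=
  mul_nonneg hy.1 (by nlinarith [hq.1, hy.2])

lemma tendsto_mul_pow_sub_one_rpow_one_div {a b : ℝ} (ha : 0 < a) (hb : 0 < b) :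
    Tendsto (fun n : ℕ => (a * b ^ (n - 1)) ^ (1 / (n : ℝ))) atTop (𝓝 b) := by
  have hab := div_pos ha hb
  have hlim : Tendsto (fun n : ℕ => (a / b) ^ (1 / (n : ℝ)) * b) atTop (𝓝 b) := by
    simpa using ((Real.continuousAt_const_rpow hab.ne').tendsto.comp
      tendsto_one_div_atTop_nhds_zero_nat).mul_const b
  refine hlim.congr' ?_
  filter_upwards [eventually_ne_atTop 0] with n hn
  have hpow : a * b ^ (n - 1) = a / b * b ^ n := by
    rw [← Nat.sub_add_cancel (Nat.one_le_iff_ne_zero.2 hn), pow_succ, Nat.add_sub_cancel]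
    field_simp
  rw [hpow, Real.mul_rpow hab.le (by positivity), one_div, Real.pow_rpow_inv_natCast hb.le hn]

lemma exists_zero_mem_Ioo_of_strictMonoOn {f : ℝ → ℝ} {a b : ℝ} (hab : a ≤ b)
    (hc : ContinuousOn f (Icc a b)) (hm : StrictMonoOn f (Icc a b)) (ha : f a < 0) (hb : 0 < f b) :
    ∃ x ∈ Ioo a b, f x = 0 ∧ ∀ y ∈ Ioo a b, f y = 0 → y = x := by
  obtain ⟨x, hx, hfx⟩ := intermediate_value_Icc hab hc ⟨ha.le, hb.le⟩
  have hxa : a ≠ x := by rintro rfl; linarith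
  have hxb : x ≠ b := by rintro rfl; linarith
  exact ⟨x, ⟨hx.1.lt_of_ne hxa, hx.2.lt_of_ne hxb⟩, hfx,
    fun y hy hfy => hm.injOn (Ioo_subset_Icc_self hy) hx (hfy.trans hfx.symm)⟩

lemma tendsto_of_tendsto_of_monotoneOn_of_eq_zero {F : ℕ → ℝ → ℝ} {f : ℝ → ℝ} {x : ℕ → ℝ}
    {a b x₀ : ℝ} (hF : ∀ᶠ n in atTop, MonotoneOn (F n) (Ioo a b) ∧ x n ∈ Ioo a b ∧ F n (x n) = 0)
    (hlim : ∀ y ∈ Ioo a b, Tendsto (fun n => F n y) atTop (𝓝 (f y)))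
    (hf : StrictMonoOn f (Ioo a b)) (hx₀ : x₀ ∈ Ioo a b) (hfx₀ : f x₀ = 0) :
    Tendsto x atTop (𝓝 x₀) := by
  refine tendsto_order.2 ⟨fun y hy => ?_, fun y hy => ?_⟩
  · rcases le_or_gt y a with hya | hay
    · filter_upwards [hF] with n hn using hya.trans_lt hn.2.1.1
    have hyI : y ∈ Ioo a b := ⟨hay, hy.trans hx₀.2⟩
    filter_upwards [hF, (hlim y hyI).eventually (gt_mem_nhds (hfx₀ ▸ hf hyI hx₀ hy))]
      with n ⟨hmono, hxn, hzero⟩ hFy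
    by_contra! hle
    linarith [hmono hxn hyI hle]
  · rcases le_or_gt b y with hby | hyb
    · filter_upwards [hF] with n hn using hn.2.1.2.trans_le hby
    have hyI : y ∈ Ioo a b := ⟨hx₀.1.trans hy, hyb⟩
    filter_upwards [hF, (hlim y hyI).eventually (lt_mem_nhds (hfx₀ ▸ hf hx₀ hyI hy))]
      with n ⟨hmono, hxn, hzero⟩ hFy
    by_contra! hle
    linarith [hmono hyI hxn hle]

section

variable {d1 d2 : ℕ} {q p : ℝ}

noncomputable def frogW (d1 d2 : ℕ) (p : ℝ) : ℝ := frogKappa d1 d2 / p + ((d2 : ℝ) - d1) * p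

lemma frogW_strictAntiOn : StrictAntiOn (frogW d1 d2) (Ioc 0 1) := by
  rintro x ⟨hx0, hx1⟩ y ⟨hy0, hy1⟩ hxy
  have hκ : frogKappa d1 d2 ≤ frogKappa d1 d2 / (x * y) :=
    le_div_self (by unfold frogKappa; positivity) (by positivity) (by nlinarith)
  have hκe : (d2 : ℝ) - d1 < frogKappa d1 d2 := sub_pos.1 (by unfold frogKappa; ring_nf; positivity)
  have hdiff : frogW d1 d2 x - frogW d1 d2 y =
      (y - x) * (frogKappa d1 d2 / (x * y) - ((d2 : ℝ) - d1)) := by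
    unfold frogW; field_simp; ring
  nlinarith [mul_pos (sub_pos.2 hxy) (sub_pos.2 (hκe.trans_le hκ))]

lemma frogW_one : frogW d1 d2 1 = d1 * d2 + 2 * d2 + 1 := by
  simp only [frogW, frogKappa]; ring

lemma frogW_one_le (hp : p ∈ Ioc 0 1) : frogW d1 d2 1 ≤ frogW d1 d2 p :=
  frogW_strictAntiOn.antitoneOn hp ⟨one_pos, le_rfl⟩ hp.2

lemma frogW_pos (hp : p ∈ Ioc 0 1) : 0 < frogW d1 d2 p :=
  lt_of_lt_of_le (by rw [frogW_one]; positivity : (0 : ℝ) < frogW d1 d2 1) (frogW_one_le hp)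

lemma frogW_one_sq_sub :
    frogW d1 d2 1 ^ 2 - 4 * frogKappa d1 d2 * d2 = ((d1 : ℝ) * d2 - 1) ^ 2 := by
  rw [frogW_one, frogKappa]; ring

lemma frogW_sq_sub_nonneg (hp : p ∈ Ioc 0 1) :
    0 ≤ frogW d1 d2 p ^ 2 - 4 * frogKappa d1 d2 * d2 := by
  have h1 := frogW_one_le (d1 := d1) (d2 := d2) hp
  have h0 : 0 ≤ frogW d1 d2 1 := (frogW_pos ⟨one_pos, le_rfl⟩).le
  nlinarith [frogW_one_sq_sub (d1 := d1) (d2 := d2), sq_nonneg ((d1 : ℝ) * d2 - 1)]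

lemma frogDelta_eq (hp : p ≠ 0) :
    frogDelta d1 d2 p = p ^ 2 * (frogW d1 d2 p ^ 2 - 4 * frogKappa d1 d2 * d2) := by
  unfold frogDelta frogW frogKappa
  field_simp
  ring

lemma frogDelta_nonneg (hp : p ∈ Icc 0 1) : 0 ≤ frogDelta d1 d2 p := by
  rcases hp.1.eq_or_lt with rfl | hp0
  · simp [frogDelta, sq_nonneg]
  · rw [frogDelta_eq hp0.ne']
    exact mul_nonneg (sq_nonneg p) (frogW_sq_sub_nonneg ⟨hp0, hp.2⟩)

/-- `frogAlpha` with its numerator rationalised: unlike `frogAlpha`, visibly continuous at 0. -/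
noncomputable def frogAlphaRat (d1 d2 : ℕ) (p : ℝ) : ℝ :=
  2 * ((d2 : ℝ) + 1) * p /
    (frogKappa d1 d2 + p ^ 2 * ((d2 : ℝ) - d1) + √(frogDelta d1 d2 p))

lemma frogAlphaRat_denom_pos (hp : p ∈ Icc 0 1) :
    0 < frogKappa d1 d2 + p ^ 2 * ((d2 : ℝ) - d1) + √(frogDelta d1 d2 p) := by
  have hd1 : (d1 : ℝ) * p ^ 2 ≤ d1 := mul_le_of_le_one_right d1.cast_nonneg (pow_le_one₀ hp.1 hp.2)
  have : 0 ≤ (d1 : ℝ) * d2 + p ^ 2 * d2 := by positivity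
  unfold frogKappa
  linarith [Real.sqrt_nonneg (frogDelta d1 d2 p)]

lemma frogAlpha_eq_frogAlphaRat (hd2 : 0 < d2) (hp : p ∈ Icc 0 1) :
    frogAlpha d1 d2 p = frogAlphaRat d1 d2 p := by
  rcases eq_or_ne p 0 with rfl | hp0
  · simp [frogAlpha, frogAlphaRat]
  · rw [frogAlpha, if_neg hp0, frogAlphaRat]
    refine sub_sqrt_div_eq_div_add_sqrt (frogDelta_nonneg hp) (frogAlphaRat_denom_pos hp).ne'
      (by positivity) ?_
    unfold frogDelta frogKappa
    ring

lemma frogAlphaRat_eq_of_pos (hp : p ∈ Ioc 0 1) :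
    frogAlphaRat d1 d2 p = 2 * ((d2 : ℝ) + 1) /
      (frogW d1 d2 p + √(frogW d1 d2 p ^ 2 - 4 * frogKappa d1 d2 * d2)) := by
  have hp0 := hp.1.ne'
  rw [frogAlphaRat, frogDelta_eq hp0, Real.sqrt_mul (sq_nonneg p), Real.sqrt_sq hp.1.le,
    show frogKappa d1 d2 + p ^ 2 * ((d2 : ℝ) - d1) = p * frogW d1 d2 p by
      unfold frogW; field_simp,
    ← mul_add, mul_comm (2 * ((d2 : ℝ) + 1)) p, mul_div_mul_left _ _ hp0]

lemma frogAlphaRat_continuousOn : ContinuousOn (frogAlphaRat d1 d2) (Icc 0 1) := by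
  refine ContinuousOn.div (by fun_prop) ?_ fun p hp => (frogAlphaRat_denom_pos hp).ne'
  unfold frogDelta
  fun_prop

lemma frogAlphaRat_strictMonoOn : StrictMonoOn (frogAlphaRat d1 d2) (Icc 0 1) := by
  intro x hx y hy hxy
  have hy' : y ∈ Ioc 0 1 := ⟨hx.1.trans_lt hxy, hy.2⟩
  have hy_pos : 0 < frogAlphaRat d1 d2 y :=
    div_pos (by have := hy'.1; positivity) (frogAlphaRat_denom_pos hy)
  rcases hx.1.eq_or_lt with rfl | hx0
  · simpa [frogAlphaRat] using hy_pos
  have hx' : x ∈ Ioc 0 1 := ⟨hx0, hx.2⟩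
  rw [frogAlphaRat_eq_of_pos hx', frogAlphaRat_eq_of_pos hy']
  have hw := frogW_strictAntiOn (d1 := d1) (d2 := d2) hx' hy' hxy
  have hwy := frogW_pos (d1 := d1) (d2 := d2) hy'
  have hsqrt : √(frogW d1 d2 y ^ 2 - 4 * frogKappa d1 d2 * d2) ≤
      √(frogW d1 d2 x ^ 2 - 4 * frogKappa d1 d2 * d2) :=
    Real.sqrt_le_sqrt (by nlinarith)
  exact div_lt_div_of_pos_left (by positivity) (by positivity) (by linarith)

lemma frogAlpha_continuousOn (hd2 : 0 < d2) : ContinuousOn (frogAlpha d1 d2) (Icc 0 1) :=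
  frogAlphaRat_continuousOn.congr fun _ hp => frogAlpha_eq_frogAlphaRat hd2 hp

lemma frogAlpha_strictMonoOn (hd2 : 0 < d2) : StrictMonoOn (frogAlpha d1 d2) (Icc 0 1) :=
  frogAlphaRat_strictMonoOn.congr fun _ hp => (frogAlpha_eq_frogAlphaRat hd2 hp).symm

@[simp]
lemma frogAlpha_zero : frogAlpha d1 d2 0 = 0 := by simp [frogAlpha]

lemma frogAlpha_one (hd1 : 0 < d1) (hd2 : 0 < d2) :
    frogAlpha d1 d2 1 = ((d2 : ℝ) + 1) / (d2 * ((d1 : ℝ) + 1)) := by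
  have h1 : (1 : ℝ) ≤ d1 := by exact_mod_cast hd1
  have h2 : (1 : ℝ) ≤ d2 := by exact_mod_cast hd2
  rw [frogAlpha_eq_frogAlphaRat hd2 ⟨zero_le_one, le_rfl⟩,
    frogAlphaRat_eq_of_pos ⟨one_pos, le_rfl⟩, frogW_one_sq_sub,
    Real.sqrt_sq (by nlinarith), frogW_one, div_eq_div_iff (by nlinarith) (by positivity)]
  ring

lemma mapsTo_frogAlpha (hd1 : 0 < d1) (hd2 : 0 < d2) :
    MapsTo (frogAlpha d1 d2) (Icc 0 1) (Icc 0 1) := by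
  intro p hp
  have hmono := (frogAlpha_strictMonoOn (d1 := d1) hd2).monotoneOn
  refine ⟨frogAlpha_zero (d1 := d1) (d2 := d2) ▸ hmono ⟨le_rfl, zero_le_one⟩ hp hp.1,
    (hmono hp ⟨zero_le_one, le_rfl⟩ hp.2).trans ?_⟩
  have h1 : (1 : ℝ) ≤ d1 := by exact_mod_cast hd1
  have h2 : (1 : ℝ) ≤ d2 := by exact_mod_cast hd2
  rw [frogAlpha_one hd1 hd2, div_le_one (by positivity)]
  nlinarith

lemma frogAlpha_one_lt_one (h : 1 < d1 * d2) : frogAlpha d1 d2 1 < 1 := by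
  have hd1 : 0 < d1 := Nat.pos_of_ne_zero (by rintro rfl; simp at h)
  have hd2 : 0 < d2 := Nat.pos_of_ne_zero (by rintro rfl; simp at h)
  have h' : (1 : ℝ) < d1 * d2 := by exact_mod_cast h
  rw [frogAlpha_one hd1 hd2, div_lt_one (by positivity)]
  linarith

lemma frogBeta_eq_frogAlpha : frogBeta d1 d2 = frogAlpha d2 d1 := by
  ext p
  have hκ : frogKappa d2 d1 = frogKappa d1 d2 := by unfold frogKappa; ring
  have hΔ : frogDelta d2 d1 p = frogDelta d1 d2 p := by unfold frogDelta; rw [hκ]; ring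
  rw [frogBeta, frogAlpha, hκ, hΔ]

lemma frogBeta_continuousOn (hd1 : 0 < d1) : ContinuousOn (frogBeta d1 d2) (Icc 0 1) :=
  frogBeta_eq_frogAlpha ▸ frogAlpha_continuousOn hd1

lemma frogBeta_strictMonoOn (hd1 : 0 < d1) : StrictMonoOn (frogBeta d1 d2) (Icc 0 1) :=
  frogBeta_eq_frogAlpha ▸ frogAlpha_strictMonoOn hd1

lemma mapsTo_frogBeta (hd1 : 0 < d1) (hd2 : 0 < d2) :
    MapsTo (frogBeta d1 d2) (Icc 0 1) (Icc 0 1) :=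
  frogBeta_eq_frogAlpha ▸ mapsTo_frogAlpha hd2 hd1

@[simp]
lemma frogBeta_zero : frogBeta d1 d2 0 = 0 := by simp [frogBeta]

lemma frogAlpha_one_mul_frogBeta_one (hd1 : 0 < d1) (hd2 : 0 < d2) :
    frogAlpha d1 d2 1 * frogBeta d1 d2 1 = 1 / ((d1 : ℝ) * d2) := by
  rw [frogBeta_eq_frogAlpha, frogAlpha_one hd1 hd2, frogAlpha_one hd2 hd1]
  field_simp

noncomputable def frogA (d1 d2 : ℕ) (q p : ℝ) : ℝ :=
  frogAlpha d1 d2 p * (frogBeta d1 d2 p * (1 + q * (1 - frogBeta d1 d2 p)))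

noncomputable def frogG (d1 d2 : ℕ) (q p : ℝ) : ℝ :=
  frogAlpha d1 d2 p * (1 + q * (1 - frogAlpha d1 d2 p)) *
    (frogBeta d1 d2 p * (1 + q * (1 - frogBeta d1 d2 p)))

lemma frogG_strictMonoOn (hd1 : 0 < d1) (hd2 : 0 < d2) (hq : q ∈ Icc 0 1) :
    StrictMonoOn (frogG d1 d2 q) (Icc 0 1) := by
  have hu := strictMonoOn_mul_one_add_mul_one_sub hq
  have huα := hu.comp (frogAlpha_strictMonoOn hd2) (mapsTo_frogAlpha hd1 hd2)
  have huβ := hu.comp (frogBeta_strictMonoOn hd1) (mapsTo_frogBeta hd1 hd2)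
  unfold frogG
  simpa only [pow_one, Function.comp_apply] using huα.mul_pow_of_nonneg huβ
    (fun p hp => mul_one_add_mul_one_sub_nonneg hq (mapsTo_frogAlpha hd1 hd2 hp))
    (fun p hp => mul_one_add_mul_one_sub_nonneg hq (mapsTo_frogBeta hd1 hd2 hp)) 1

lemma frogA_strictMonoOn (hd1 : 0 < d1) (hd2 : 0 < d2) (hq : q ∈ Icc 0 1) :
    StrictMonoOn (frogA d1 d2 q) (Icc 0 1) := by
  have huβ := (strictMonoOn_mul_one_add_mul_one_sub hq).comp (frogBeta_strictMonoOn hd1)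
    (mapsTo_frogBeta hd1 hd2)
  unfold frogA
  simpa only [pow_one, Function.comp_apply] using
    (frogAlpha_strictMonoOn hd2).mul_pow_of_nonneg huβ (fun p hp => (mapsTo_frogAlpha hd1 hd2 hp).1)
      (fun p hp => mul_one_add_mul_one_sub_nonneg hq (mapsTo_frogBeta hd1 hd2 hp)) 1

@[simp]
lemma frogG_zero : frogG d1 d2 q 0 = 0 := by simp [frogG]

@[simp]
lemma frogA_zero : frogA d1 d2 q 0 = 0 := by simp [frogA]

lemma frogG_one (hdd : 1 < d1 * d2) (hq : 0 < q) : 1 / ((d1 : ℝ) * d2) < frogG d1 d2 q 1 := by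
  have hd1 : 0 < d1 := Nat.pos_of_ne_zero (by rintro rfl; simp at hdd)
  have hd2 : 0 < d2 := Nat.pos_of_ne_zero (by rintro rfl; simp at hdd)
  have hα := frogAlpha_one_lt_one hdd
  have hβ : frogBeta d1 d2 1 < 1 :=
    frogBeta_eq_frogAlpha ▸ frogAlpha_one_lt_one (by rwa [mul_comm])
  rw [show frogG d1 d2 q 1 = frogAlpha d1 d2 1 * frogBeta d1 d2 1 *
      ((1 + q * (1 - frogAlpha d1 d2 1)) * (1 + q * (1 - frogBeta d1 d2 1))) by
        unfold frogG; ring,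
    frogAlpha_one_mul_frogBeta_one hd1 hd2]
  refine lt_mul_of_one_lt_right (by positivity) (one_lt_mul_of_lt_of_le ?_ ?_) <;> nlinarith

lemma frogG_nonneg (hd1 : 0 < d1) (hd2 : 0 < d2) (hq : q ∈ Icc 0 1) (hp : p ∈ Icc 0 1) :
    0 ≤ frogG d1 d2 q p :=
  frogG_zero (d1 := d1) (d2 := d2) (q := q) ▸
    (frogG_strictMonoOn hd1 hd2 hq).monotoneOn ⟨le_rfl, zero_le_one⟩ hp hp.1

lemma frogA_nonneg (hd1 : 0 < d1) (hd2 : 0 < d2) (hq : q ∈ Icc 0 1) (hp : p ∈ Icc 0 1) :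
    0 ≤ frogA d1 d2 q p :=
  frogA_zero (d1 := d1) (d2 := d2) (q := q) ▸
    (frogA_strictMonoOn hd1 hd2 hq).monotoneOn ⟨le_rfl, zero_le_one⟩ hp hp.1

lemma frogG_pos (hd1 : 0 < d1) (hd2 : 0 < d2) (hq : q ∈ Icc 0 1) (hp : p ∈ Ioc 0 1) :
    0 < frogG d1 d2 q p :=
  frogG_zero (d1 := d1) (d2 := d2) (q := q) ▸
    frogG_strictMonoOn hd1 hd2 hq ⟨le_rfl, zero_le_one⟩ (Ioc_subset_Icc_self hp) hp.1

lemma frogA_pos (hd1 : 0 < d1) (hd2 : 0 < d2) (hq : q ∈ Icc 0 1) (hp : p ∈ Ioc 0 1) :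
    0 < frogA d1 d2 q p :=
  frogA_zero (d1 := d1) (d2 := d2) (q := q) ▸
    frogA_strictMonoOn hd1 hd2 hq ⟨le_rfl, zero_le_one⟩ (Ioc_subset_Icc_self hp) hp.1

lemma frogF_eq : frogF d1 d2 q p = frogG d1 d2 q p - 1 / ((d1 : ℝ) * d2) := by
  unfold frogF frogG; ring

lemma frogPhi_eq {n : ℕ} (hn : n ≠ 0) :
    frogPhi d1 d2 q n p = q * frogA d1 d2 q p * frogG d1 d2 q p ^ (n - 1) := by
  obtain ⟨m, rfl⟩ := Nat.exists_eq_succ_of_ne_zero hn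
  simp only [frogPhi, frogA, frogG, Nat.succ_sub_one, pow_succ, mul_pow]
  ring

lemma frogF_continuousOn (hd1 : 0 < d1) (hd2 : 0 < d2) (q : ℝ) :
    ContinuousOn (frogF d1 d2 q) (Icc 0 1) := by
  have := frogAlpha_continuousOn (d1 := d1) hd2
  have := frogBeta_continuousOn (d2 := d2) hd1
  unfold frogF
  fun_prop

lemma frogF_strictMonoOn (hd1 : 0 < d1) (hd2 : 0 < d2) (hq : q ∈ Icc 0 1) :
    StrictMonoOn (frogF d1 d2 q) (Icc 0 1) := fun x hx y hy hxy => by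
  simpa only [frogF_eq, sub_lt_sub_iff_right] using frogG_strictMonoOn hd1 hd2 hq hx hy hxy

lemma frogF_zero_neg (hd1 : 0 < d1) (hd2 : 0 < d2) : frogF d1 d2 q 0 < 0 := by
  rw [frogF_eq, frogG_zero, zero_sub, neg_lt_zero]
  positivity

lemma frogF_one_pos (hdd : 1 < d1 * d2) (hq : 0 < q) : 0 < frogF d1 d2 q 1 := by
  rw [frogF_eq, sub_pos]
  exact frogG_one hdd hq

lemma frogFn_continuousOn (hd1 : 0 < d1) (hd2 : 0 < d2) (q : ℝ) (n : ℕ) :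
    ContinuousOn (frogFn d1 d2 q n) (Icc 0 1) := by
  have := frogAlpha_continuousOn (d1 := d1) hd2
  have := frogBeta_continuousOn (d2 := d2) hd1
  unfold frogFn frogPhi
  exact ContinuousOn.sub (ContinuousOn.rpow_const (by fun_prop) fun _ _ => Or.inr (by positivity))
    continuousOn_const

lemma frogFn_strictMonoOn (hd1 : 0 < d1) (hd2 : 0 < d2) (hq : q ∈ Ioc 0 1) {n : ℕ} (hn : n ≠ 0) :
    StrictMonoOn (frogFn d1 d2 q n) (Icc 0 1) := by
  have hq' := Ioc_subset_Icc_self hq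
  have hAG := (frogA_strictMonoOn hd1 hd2 hq').mul_pow_of_nonneg (frogG_strictMonoOn hd1 hd2 hq')
    (fun _ => frogA_nonneg hd1 hd2 hq') (fun _ => frogG_nonneg hd1 hd2 hq') (n - 1)
  intro x hx y hy hxy
  simp only [frogFn, frogPhi_eq hn, mul_assoc, sub_lt_sub_iff_right]
  refine Real.rpow_lt_rpow ?_ (mul_lt_mul_of_pos_left (hAG hx hy hxy) hq.1)
    (one_div_pos.2 (Nat.cast_pos.2 (Nat.pos_of_ne_zero hn)))
  have := frogA_nonneg hd1 hd2 hq' hx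
  have := frogG_nonneg hd1 hd2 hq' hx
  have := hq.1
  positivity

lemma frogFn_zero_neg (hd1 : 0 < d1) (hd2 : 0 < d2) {n : ℕ} (hn : n ≠ 0) :
    frogFn d1 d2 q n 0 < 0 := by
  rw [frogFn, frogPhi_eq hn, frogA_zero, mul_zero, zero_mul,
    Real.zero_rpow (one_div_ne_zero (Nat.cast_ne_zero.2 hn)), zero_sub, neg_lt_zero]
  positivity

lemma frogFn_tendsto (hd1 : 0 < d1) (hd2 : 0 < d2) (hq : q ∈ Ioc 0 1) (hp : p ∈ Ioc 0 1) :
    Tendsto (fun n => frogFn d1 d2 q n p) atTop (𝓝 (frogF d1 d2 q p)) := by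
  have hq' := Ioc_subset_Icc_self hq
  rw [frogF_eq]
  refine ((tendsto_mul_pow_sub_one_rpow_one_div (mul_pos hq.1 (frogA_pos hd1 hd2 hq' hp))
    (frogG_pos hd1 hd2 hq' hp)).sub_const _).congr' ?_
  filter_upwards [eventually_ne_atTop 0] with n hn
  rw [frogFn, frogPhi_eq hn]

end

/-- For d1, d2 ≥ 1 with d1 ≥ 2 or d2 ≥ 2 and q ∈ (0,1]: there is N such that for every
n ≥ N the function fₙ is continuous and strictly increasing on [0,1] with
fₙ(0) < 0 < fₙ(1), hence has a unique root p̃ₙ ∈ (0,1); and the sequence (p̃ₙ)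
converges to the unique root p̃ ∈ (0,1) of f. -/
theorem frogFn_roots_converge (d1 d2 : ℕ) (hd1 : 1 ≤ d1) (hd2 : 1 ≤ d2)
    (hd : 2 ≤ d1 ∨ 2 ≤ d2) (q : ℝ) (hq : q ∈ Set.Ioc (0 : ℝ) 1) :
    ∃ (N : ℕ) (pt : ℕ → ℝ) (ps : ℝ),
      (∀ n, N ≤ n →
        ContinuousOn (frogFn d1 d2 q n) (Set.Icc (0 : ℝ) 1) ∧
        StrictMonoOn (frogFn d1 d2 q n) (Set.Icc (0 : ℝ) 1) ∧
        frogFn d1 d2 q n 0 < 0 ∧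
        0 < frogFn d1 d2 q n 1 ∧
        pt n ∈ Set.Ioo (0 : ℝ) 1 ∧
        frogFn d1 d2 q n (pt n) = 0 ∧
        (∀ x ∈ Set.Ioo (0 : ℝ) 1, frogFn d1 d2 q n x = 0 → x = pt n)) ∧
      ps ∈ Set.Ioo (0 : ℝ) 1 ∧
      frogF d1 d2 q ps = 0 ∧
      (∀ x ∈ Set.Ioo (0 : ℝ) 1, frogF d1 d2 q x = 0 → x = ps) ∧
      Filter.Tendsto pt Filter.atTop (nhds ps) := by
  have hdd : 1 < d1 * d2 := by rcases hd with h | h <;> nlinarith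
  have hF_mono := frogF_strictMonoOn hd1 hd2 (Ioc_subset_Icc_self hq)
  obtain ⟨ps, hps, hF_ps, hps_unique⟩ := exists_zero_mem_Ioo_of_strictMonoOn zero_le_one
    (frogF_continuousOn hd1 hd2 q) hF_mono (frogF_zero_neg hd1 hd2) (frogF_one_pos hdd hq.1)
  have hFn : ∀ᶠ n in atTop, ContinuousOn (frogFn d1 d2 q n) (Icc 0 1) ∧
      StrictMonoOn (frogFn d1 d2 q n) (Icc 0 1) ∧
      frogFn d1 d2 q n 0 < 0 ∧ 0 < frogFn d1 d2 q n 1 := by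
    filter_upwards [eventually_ne_atTop 0, (frogFn_tendsto hd1 hd2 hq ⟨one_pos, le_rfl⟩).eventually
      (lt_mem_nhds (frogF_one_pos hdd hq.1))] with n hn hFn_one
    exact ⟨frogFn_continuousOn hd1 hd2 q n, frogFn_strictMonoOn hd1 hd2 hq hn,
      frogFn_zero_neg hd1 hd2 hn, hFn_one⟩
  obtain ⟨N, hN⟩ := eventually_atTop.1 hFn
  have hroot : ∀ n, ∃ x, N ≤ n → x ∈ Ioo 0 1 ∧ frogFn d1 d2 q n x = 0 ∧
      ∀ y ∈ Ioo 0 1, frogFn d1 d2 q n y = 0 → y = x := fun n => by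
    by_cases hn : N ≤ n
    · obtain ⟨hc, hm, h0, h1⟩ := hN n hn
      obtain ⟨x, hx⟩ := exists_zero_mem_Ioo_of_strictMonoOn zero_le_one hc hm h0 h1
      exact ⟨x, fun _ => hx⟩
    · exact ⟨0, fun h => absurd h hn⟩
  choose pt hpt using hroot
  refine ⟨N, pt, ps, fun n hn => ⟨(hN n hn).1, (hN n hn).2.1, (hN n hn).2.2.1, (hN n hn).2.2.2,
    hpt n hn⟩, hps, hF_ps, hps_unique, ?_⟩
  refine tendsto_of_tendsto_of_monotoneOn_of_eq_zero ?_
    (fun y hy => frogFn_tendsto hd1 hd2 hq (Ioo_subset_Ioc_self hy))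
    (hF_mono.mono Ioo_subset_Icc_self) hps hF_ps
  filter_upwards [eventually_ge_atTop N] with n hn
  exact ⟨(hN n hn).2.1.monotoneOn.mono Ioo_subset_Icc_self, (hpt n hn).1, (hpt n hn).2.1⟩
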